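/- arXiv:2601.04528 — 2 statements merged into one kernel-verified Lean document; each statement's English description precedes it below -/
import Mathlib

section
/- Let u be a nonzero vector in R^m embedded in the Clifford algebra R_{0,m}, let a ∈ R_{0,m}, and let c₁, c₂ ∈ R with c₁ ≠ c₂ and c₁ ≠ -c₂. If c₁·a·u + c₂·u·a = 0, then a = 0. -/
noncomputable section

open CliffordAlgebra

/-- The quadratic form `x ↦ -∑ xᵢ²` on `ℝ^m`, so that `CliffordAlgebra (Qf m)` is the
real Clifford algebra `R_{0,m}` with generators `e i` satisfying
`e i * e j + e j * e i = -2 δ_{ij}`. -/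
def Qf (m : ℕ) : QuadraticForm ℝ (Fin m → ℝ) :=
  QuadraticMap.weightedSumSquares ℝ (fun _ : Fin m => (-1 : ℝ))

/-- The generator `e i` of `R_{0,m}`. -/
def e (m : ℕ) (i : Fin m) : CliffordAlgebra (Qf m) :=
  ι (Qf m) (Pi.single i 1)

theorem Qf_apply (m : ℕ) (u : Fin m → ℝ) : Qf m u = -(u ⬝ᵥ u) := by
  simp [Qf, QuadraticMap.weightedSumSquares_apply, dotProduct]

theorem Qf_ne_zero {m : ℕ} {u : Fin m → ℝ} (hu : u ≠ 0) : Qf m u ≠ 0 := by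
  rw [Qf_apply, neg_ne_zero]
  exact mt dotProduct_self_eq_zero.mp hu

/-- Multiplying the relation by `v` on the left and on the right turns both terms into
multiples of `a` and of `v * a * v`; eliminating `v * a * v` leaves `(c₂² - c₁²) q • a = 0`. -/
theorem eq_zero_of_smul_mul_add_smul_mul_eq_zero {K A : Type*} [Field K] [Ring A] [Algebra K A]
    {v a : A} {q c₁ c₂ : K} (hv : v * v = algebraMap K A q) (hq : q ≠ 0)
    (h₁ : c₁ ≠ c₂) (h₂ : c₁ ≠ -c₂) (h : c₁ • (a * v) + c₂ • (v * a) = 0) : a = 0 := by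
  have hleft : c₁ • (v * a * v) + (c₂ * q) • a = 0 := by
    have := congrArg (v * ·) h
    simp only [mul_add, mul_smul_comm, mul_zero, ← mul_assoc, hv, ← Algebra.smul_def,
      smul_smul] at this
    exact this
  have hright : (c₁ * q) • a + c₂ • (v * a * v) = 0 := by
    have := congrArg (· * v) h
    simp only [add_mul, smul_mul_assoc, zero_mul, mul_assoc, hv, ← Algebra.commutes,
      ← Algebra.smul_def, smul_smul] at this
    rwa [← mul_assoc] at this
  have hcomb : ((c₂ - c₁) * (c₂ + c₁) * q) • a = 0 := by
    linear_combination (norm := module) c₂ • hleft - c₁ • hright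
  have hcoeff : (c₂ - c₁) * (c₂ + c₁) * q ≠ 0 :=
    mul_ne_zero
      (mul_ne_zero (sub_ne_zero.mpr h₁.symm) fun hsum => h₂ (by linear_combination hsum)) hq
  exact (smul_eq_zero.mp hcomb).resolve_left hcoeff

/-- If `u` is a nonzero vector of `ℝ^m` embedded in `R_{0,m}`,
`a ∈ R_{0,m}`, and `c₁, c₂ ∈ ℝ` with `c₁ ≠ c₂` and `c₁ ≠ -c₂`, then
`c₁·a·u + c₂·u·a = 0` implies `a = 0`. -/
theorem stmt_4 (m : ℕ) (u : Fin m → ℝ) (hu : u ≠ 0) (a : CliffordAlgebra (Qf m))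
    (c₁ c₂ : ℝ) (h₁ : c₁ ≠ c₂) (h₂ : c₁ ≠ -c₂)
    (h : c₁ • (a * ι (Qf m) u) + c₂ • (ι (Qf m) u * a) = 0) :
    a = 0 :=
  eq_zero_of_smul_mul_add_smul_mul_eq_zero (ι_sq_scalar (Qf m) u) (Qf_ne_zero hu) h₁ h₂ h

end
end

section
/- Let μ > 0 and λ > -2μ/3. If f : Ω → R_{0,m} is C² and satisfies the Lamé-Navier equation ((μ+λ)/2)·D f D + ((3μ+λ)/2)·D D f = 0 on an open set Ω ⊆ R^m, then the function g = M f := ((μ+λ)/2)·f D + ((3μ+λ)/2)·D f is left monogenic on Ω (provided f is C³), i.e., D g = 0. -/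
noncomputable section

open CliffordAlgebra

variable (m : ℕ) [Module.Finite ℝ (CliffordAlgebra (Qf m))]

/-- A linear identification of the (finite-dimensional) Clifford algebra `R_{0,m}` with a
finite-dimensional coordinate space, used to transport calculus on `ℝ^N` to
`R_{0,m}`-valued functions. -/
def coordEquiv :
    CliffordAlgebra (Qf m) ≃ₗ[ℝ]
      (Fin (Module.finrank ℝ (CliffordAlgebra (Qf m))) → ℝ) :=
  (Module.finBasis ℝ (CliffordAlgebra (Qf m))).equivFun

/-- The partial derivative `∂f/∂xᵢ` of an `R_{0,m}`-valued function on `ℝ^m`. -/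
def pd (f : (Fin m → ℝ) → CliffordAlgebra (Qf m)) (i : Fin m) (x : Fin m → ℝ) :
    CliffordAlgebra (Qf m) :=
  (coordEquiv m).symm (fderiv ℝ (fun y => coordEquiv m (f y)) x (Pi.single i 1))

/-- The left Dirac operator `D f = Σᵢ eᵢ · ∂f/∂xᵢ`. -/
def diracL (f : (Fin m → ℝ) → CliffordAlgebra (Qf m)) (x : Fin m → ℝ) :
    CliffordAlgebra (Qf m) :=
  ∑ i, e m i * pd m f i x

/-- The right Dirac operator `f D = Σᵢ (∂f/∂xᵢ) · eᵢ`. -/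
def diracR (f : (Fin m → ℝ) → CliffordAlgebra (Qf m)) (x : Fin m → ℝ) :
    CliffordAlgebra (Qf m) :=
  ∑ i, pd m f i x * e m i

/-- The componentwise Laplacian `Δ f = Σᵢ ∂²f/∂xᵢ²`. -/
def lap (f : (Fin m → ℝ) → CliffordAlgebra (Qf m)) (x : Fin m → ℝ) :
    CliffordAlgebra (Qf m) :=
  ∑ i, pd m (pd m f i) i x

/-- `C^n` smoothness of an `R_{0,m}`-valued function, via the coordinate identification. -/
def CliffSmooth (n : ℕ∞) (f : (Fin m → ℝ) → CliffordAlgebra (Qf m)) : Prop :=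
  ContDiff ℝ n fun y => coordEquiv m (f y)

/-- The operator `M f = ((μ+λ)/2)·fD + ((3μ+λ)/2)·Df`. -/
def Mop (m : ℕ) [Module.Finite ℝ (CliffordAlgebra (Qf m))] (mu lam : ℝ)
    (f : (Fin m → ℝ) → CliffordAlgebra (Qf m)) (x : Fin m → ℝ) :
    CliffordAlgebra (Qf m) :=
  ((mu + lam) / 2) • diracR m f x + ((3 * mu + lam) / 2) • diracL m f x

/-- The operator `M̄ f = ((μ+λ)/2)·Df + ((3μ+λ)/2)·fD`. -/
def Mbar (m : ℕ) [Module.Finite ℝ (CliffordAlgebra (Qf m))] (mu lam : ℝ)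
    (f : (Fin m → ℝ) → CliffordAlgebra (Qf m)) (x : Fin m → ℝ) :
    CliffordAlgebra (Qf m) :=
  ((mu + lam) / 2) • diracL m f x + ((3 * mu + lam) / 2) • diracR m f x

/-- The Cliffordian Lamé-Navier operator `L f = ((μ+λ)/2)·DfD + ((3μ+λ)/2)·DDf`. -/
def LN (m : ℕ) [Module.Finite ℝ (CliffordAlgebra (Qf m))] (mu lam : ℝ)
    (f : (Fin m → ℝ) → CliffordAlgebra (Qf m)) (x : Fin m → ℝ) :
    CliffordAlgebra (Qf m) :=
  ((mu + lam) / 2) • diracR m (diracL m f) x +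
    ((3 * mu + lam) / 2) • diracL m (diracL m f) x

variable {m}

theorem pd_linearMap (T : CliffordAlgebra (Qf m) →ₗ[ℝ] CliffordAlgebra (Qf m))
    (f : (Fin m → ℝ) → CliffordAlgebra (Qf m)) (i : Fin m) (x : Fin m → ℝ)
    (hf : DifferentiableAt ℝ (fun y => coordEquiv m (f y)) x) :
    pd m (fun y => T (f y)) i x = T (pd m f i x) := by
  set N := Module.finrank ℝ (CliffordAlgebra (Qf m))
  let T' : (Fin N → ℝ) →L[ℝ] (Fin N → ℝ) :=
    LinearMap.toContinuousLinearMap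
      (((coordEquiv m).toLinearMap.comp T).comp (coordEquiv m).symm.toLinearMap)
  have hT' : ∀ u : Fin N → ℝ, T' u = coordEquiv m (T ((coordEquiv m).symm u)) := by
    intro u; rfl
  have hcomp : (fun y => coordEquiv m (T (f y))) = T' ∘ (fun y => coordEquiv m (f y)) := by
    funext y; simp [hT']
  unfold pd
  rw [hcomp, fderiv_comp x T'.differentiableAt hf, T'.fderiv]
  simp [hT']

theorem pd_sum {ι : Type*} (s : Finset ι) (g : ι → (Fin m → ℝ) → CliffordAlgebra (Qf m))
    (i : Fin m) (x : Fin m → ℝ)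
    (hg : ∀ j ∈ s, DifferentiableAt ℝ (fun y => coordEquiv m (g j y)) x) :
    pd m (fun y => ∑ j ∈ s, g j y) i x = ∑ j ∈ s, pd m (g j) i x := by
  unfold pd
  have h1 : (fun y => coordEquiv m (∑ j ∈ s, g j y))
      = fun y => ∑ j ∈ s, coordEquiv m (g j y) := by funext y; simp
  rw [h1, fderiv_fun_sum hg]
  simp

theorem pd_add (g h : (Fin m → ℝ) → CliffordAlgebra (Qf m)) (i : Fin m) (x : Fin m → ℝ)
    (hg : DifferentiableAt ℝ (fun y => coordEquiv m (g y)) x)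
    (hh : DifferentiableAt ℝ (fun y => coordEquiv m (h y)) x) :
    pd m (fun y => g y + h y) i x = pd m g i x + pd m h i x := by
  unfold pd
  have h1 : (fun y => coordEquiv m (g y + h y))
      = fun y => coordEquiv m (g y) + coordEquiv m (h y) := by funext y; simp
  rw [h1, fderiv_fun_add hg hh]
  simp

theorem pd_smul (c : ℝ) (g : (Fin m → ℝ) → CliffordAlgebra (Qf m)) (i : Fin m) (x : Fin m → ℝ)
    (hg : DifferentiableAt ℝ (fun y => coordEquiv m (g y)) x) :
    pd m (fun y => c • g y) i x = c • pd m g i x := by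
  have := pd_linearMap (c • LinearMap.id) g i x hg
  simpa using this

theorem pd_mul_const (c : CliffordAlgebra (Qf m)) (g : (Fin m → ℝ) → CliffordAlgebra (Qf m))
    (i : Fin m) (x : Fin m → ℝ)
    (hg : DifferentiableAt ℝ (fun y => coordEquiv m (g y)) x) :
    pd m (fun y => g y * c) i x = pd m g i x * c :=
  pd_linearMap (LinearMap.mulRight ℝ c) g i x hg

theorem pd_const_mul (c : CliffordAlgebra (Qf m)) (g : (Fin m → ℝ) → CliffordAlgebra (Qf m))
    (i : Fin m) (x : Fin m → ℝ)
    (hg : DifferentiableAt ℝ (fun y => coordEquiv m (g y)) x) :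
    pd m (fun y => c * g y) i x = c * pd m g i x :=
  pd_linearMap (LinearMap.mulLeft ℝ c) g i x hg

theorem coord_pd (f : (Fin m → ℝ) → CliffordAlgebra (Qf m)) (j : Fin m) :
    (fun y => coordEquiv m (pd m f j y))
      = fun y => fderiv ℝ (fun y => coordEquiv m (f y)) y (Pi.single j 1) := by
  funext y; simp [pd]

theorem pd_contDiffAt (f : (Fin m → ℝ) → CliffordAlgebra (Qf m)) (j : Fin m) (x : Fin m → ℝ)
    (hf : ContDiffAt ℝ 3 (fun y => coordEquiv m (f y)) x) :
    ContDiffAt ℝ 2 (fun y => coordEquiv m (pd m f j y)) x := by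
  rw [coord_pd]
  have h1 : ContDiffAt ℝ 2 (fderiv ℝ (fun y => coordEquiv m (f y))) x :=
    hf.fderiv_right (by norm_num)
  exact (ContinuousLinearMap.apply ℝ _ (Pi.single j 1)).contDiff.contDiffAt.comp x h1

theorem pd_symm (f : (Fin m → ℝ) → CliffordAlgebra (Qf m)) (i j : Fin m) (x : Fin m → ℝ)
    (hf : ContDiffAt ℝ 3 (fun y => coordEquiv m (f y)) x) :
    pd m (pd m f j) i x = pd m (pd m f i) j x := by
  set F := fun y => coordEquiv m (f y) with hF
  have hdF : DifferentiableAt ℝ (fderiv ℝ F) x :=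
    (hf.fderiv_right (m := 2) (by norm_num)).differentiableAt (by norm_num)
  have key : ∀ v w : Fin m → ℝ,
      fderiv ℝ (fun y => fderiv ℝ F y v) x w = fderiv ℝ (fderiv ℝ F) x w v := by
    intro v w
    have : (fun y => fderiv ℝ F y v)
        = (ContinuousLinearMap.apply ℝ _ v) ∘ (fderiv ℝ F) := rfl
    rw [this, fderiv_comp x (ContinuousLinearMap.apply ℝ _ v).differentiableAt hdF,
      ContinuousLinearMap.fderiv]
    rfl
  have hsymm : IsSymmSndFDerivAt ℝ F x := hf.isSymmSndFDerivAt (by norm_num)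
  show (coordEquiv m).symm _ = (coordEquiv m).symm _
  congr 1
  rw [coord_pd, coord_pd, key, key, hsymm]
theorem diffAt_linearMap (T : CliffordAlgebra (Qf m) →ₗ[ℝ] CliffordAlgebra (Qf m))
    (g : (Fin m → ℝ) → CliffordAlgebra (Qf m)) (x : Fin m → ℝ)
    (hg : DifferentiableAt ℝ (fun y => coordEquiv m (g y)) x) :
    DifferentiableAt ℝ (fun y => coordEquiv m (T (g y))) x := by
  set N := Module.finrank ℝ (CliffordAlgebra (Qf m))
  let T' : (Fin N → ℝ) →L[ℝ] (Fin N → ℝ) :=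
    LinearMap.toContinuousLinearMap
      (((coordEquiv m).toLinearMap.comp T).comp (coordEquiv m).symm.toLinearMap)
  have hcomp : (fun y => coordEquiv m (T (g y))) = T' ∘ (fun y => coordEquiv m (g y)) := by
    funext y
    show _ = coordEquiv m (T ((coordEquiv m).symm (coordEquiv m (g y))))
    simp
  rw [hcomp]
  exact T'.differentiableAt.comp x hg

variable (m)

/-- Let `μ > 0`, `λ > -2μ/3`. If `f : Ω → R_{0,m}` is `C³` on an open
set `Ω ⊆ ℝ^m` and satisfies the Lamé-Navier equation there, then
`M f = ((μ+λ)/2)·fD + ((3μ+λ)/2)·Df` is left monogenic on `Ω`: `D(M f) = 0`. -/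
theorem stmt_12 (m : ℕ) [Module.Finite ℝ (CliffordAlgebra (Qf m))] (mu lam : ℝ)
    (hmu : 0 < mu) (hlam : -(2 * mu) / 3 < lam)
    (Ω : Set (Fin m → ℝ)) (hΩ : IsOpen Ω)
    (f : (Fin m → ℝ) → CliffordAlgebra (Qf m))
    (hf : ContDiffOn ℝ 3 (fun y => coordEquiv m (f y)) Ω)
    (hLN : ∀ x ∈ Ω, LN m mu lam f x = 0) :
    ∀ x ∈ Ω, diracL m (Mop m mu lam f) x = 0 := by
  intro x hx
  set a := (mu + lam) / 2 with ha
  set b := (3 * mu + lam) / 2 with hb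
  have hF3 : ContDiffAt ℝ 3 (fun y => coordEquiv m (f y)) x :=
    hf.contDiffAt (hΩ.mem_nhds hx)
  have hpdD : ∀ j, DifferentiableAt ℝ (fun y => coordEquiv m (pd m f j y)) x :=
    fun j => (pd_contDiffAt f j x hF3).differentiableAt (by norm_num)
  -- differentiability of coord ∘ diracR f and coord ∘ diracL f
  have hdR : DifferentiableAt ℝ (fun y => coordEquiv m (diracR m f y)) x := by
    have h1 : (fun y => coordEquiv m (diracR m f y))
        = fun y => ∑ j, coordEquiv m (pd m f j y * e m j) := by
      funext y; simp [diracR]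
    rw [h1]
    exact DifferentiableAt.fun_sum fun j _ =>
      diffAt_linearMap (LinearMap.mulRight ℝ (e m j)) (pd m f j) x (hpdD j)
  have hdL : DifferentiableAt ℝ (fun y => coordEquiv m (diracL m f y)) x := by
    have h1 : (fun y => coordEquiv m (diracL m f y))
        = fun y => ∑ j, coordEquiv m (e m j * pd m f j y) := by
      funext y; simp [diracL]
    rw [h1]
    exact DifferentiableAt.fun_sum fun j _ =>
      diffAt_linearMap (LinearMap.mulLeft ℝ (e m j)) (pd m f j) x (hpdD j)
  -- compute pd of diracR and diracL
  have e1 : ∀ i, pd m (diracR m f) i x = ∑ j, pd m (pd m f j) i x * e m j := by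
    intro i
    have h0 : diracR m f = fun y => ∑ j, pd m f j y * e m j := rfl
    rw [h0, pd_sum Finset.univ (fun j y => pd m f j y * e m j) i x
      (fun j _ => diffAt_linearMap (LinearMap.mulRight ℝ (e m j)) (pd m f j) x (hpdD j))]
    exact Finset.sum_congr rfl fun j _ => pd_mul_const (e m j) (pd m f j) i x (hpdD j)
  have e2 : ∀ i, pd m (diracL m f) i x = ∑ j, e m j * pd m (pd m f j) i x := by
    intro i
    have h0 : diracL m f = fun y => ∑ j, e m j * pd m f j y := rfl
    rw [h0, pd_sum Finset.univ (fun j y => e m j * pd m f j y) i x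
      (fun j _ => diffAt_linearMap (LinearMap.mulLeft ℝ (e m j)) (pd m f j) x (hpdD j))]
    exact Finset.sum_congr rfl fun j _ => pd_const_mul (e m j) (pd m f j) i x (hpdD j)
  -- pd of Mop
  have hdaR : DifferentiableAt ℝ (fun y => coordEquiv m (a • diracR m f y)) x := by
    have h1 : (fun y => coordEquiv m (a • diracR m f y))
        = fun y => a • coordEquiv m (diracR m f y) := by funext y; simp
    rw [h1]; exact hdR.const_smul a
  have hdbL : DifferentiableAt ℝ (fun y => coordEquiv m (b • diracL m f y)) x := by
    have h1 : (fun y => coordEquiv m (b • diracL m f y))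
        = fun y => b • coordEquiv m (diracL m f y) := by funext y; simp
    rw [h1]; exact hdL.const_smul b
  have hpdMop : ∀ i, pd m (Mop m mu lam f) i x
      = a • pd m (diracR m f) i x + b • pd m (diracL m f) i x := by
    intro i
    have h0 : Mop m mu lam f = fun y => a • diracR m f y + b • diracL m f y := rfl
    rw [h0, pd_add _ _ i x hdaR hdbL, pd_smul a _ i x hdR, pd_smul b _ i x hdL]
  -- main computation
  rw [show (0 : CliffordAlgebra (Qf m)) = LN m mu lam f x from (hLN x hx).symm]
  have calcL : diracL m (Mop m mu lam f) x
      = a • (∑ i, ∑ j, e m i * (pd m (pd m f j) i x * e m j))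
        + b • (∑ i, e m i * ∑ j, e m j * pd m (pd m f j) i x) := by
    show (∑ i, e m i * pd m (Mop m mu lam f) i x) = _
    rw [Finset.smul_sum, Finset.smul_sum, ← Finset.sum_add_distrib]
    refine Finset.sum_congr rfl fun i _ => ?_
    rw [hpdMop i, e1 i, e2 i, mul_add, mul_smul_comm, mul_smul_comm, Finset.mul_sum]
  rw [calcL]
  unfold LN
  congr 1
  · -- a-part
    congr 1
    show _ = ∑ j, pd m (diracL m f) j x * e m j
    rw [Finset.sum_comm]
    refine Finset.sum_congr rfl fun j _ => ?_
    rw [e2 j, Finset.sum_mul]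
    refine Finset.sum_congr rfl fun i _ => ?_
    rw [pd_symm f i j x hF3, ← mul_assoc]
  · -- b-part
    congr 1
    show _ = ∑ i, e m i * pd m (diracL m f) i x
    refine Finset.sum_congr rfl fun i _ => ?_
    rw [e2 i]

end
end
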